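/- Let u ∈ X·O_K[[X]] be invertible with u'(0) ∈ 1 + pℤ_p (and u'(0) ≠ 1 when p is odd, or u'(0) ∈ 1+4ℤ_2 when p=2). Then the map m ↦ u^{∘m} from ℤ to X·O_K[[X]] extends uniquely to a continuous map ℤ_p → X·O_K[[X]] (coefficientwise p-adic convergence) such that u^{∘(m+m')} = u^{∘m} ∘ u^{∘m'} for all m, m' ∈ ℤ_p, and (u^{∘m})'(0) = u'(0)^m. -/

import Mathlib

open PowerSeries

noncomputable def PSComp {R : Type*} [CommRing R] (f g : PowerSeries R) : PowerSeries R :=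
  PowerSeries.mk fun n => ((f.trunc (n + 1)).comp (g.trunc (n + 1))).coeff n

noncomputable def PSIter {R : Type*} [CommRing R] (f : PowerSeries R) : ℕ → PowerSeries R
  | 0 => PowerSeries.X
  | n + 1 => PSComp f (PSIter f n)

/-!
Write λ = u'(0). For each `n` the sequence `c k = coeff n (u^{∘k})` satisfies
`c (k + 1) = λ * c k + e k`, where `e` is a polynomial in the sequences of the lower
coefficients. Since λ ≠ 0 and `K` has characteristic zero, such recurrences can be solved
inside the `K`-algebra generated by `k ↦ k` and `k ↦ λ ^ k`, so by induction on `n` every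
coefficient sequence lies in that algebra. As λ is the image of some `a` with `‖a - 1‖ < 1`,
the Mahler series `∑ (x choose i) (a - 1) ^ i` interpolates `k ↦ λ ^ k` continuously on
`ℤ_[p]`; hence every coefficient sequence extends continuously to `ℤ_[p]`. The remaining
properties, and uniqueness, pass from `ℕ` to `ℤ_[p]` by density.
-/

open Finset

section Composition

variable {R : Type*} [CommRing R]

theorem coeff_pow_eq_zero_of_lt {g : R⟦X⟧} (hg : constantCoeff g = 0) {n j : ℕ} (h : n < j) :
    coeff n (g ^ j) = 0 :=
  coeff_of_lt_order n ((Nat.cast_lt.2 h).trans_le (le_order_pow_of_constantCoeff_eq_zero j hg))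

theorem coeff_subst_eq_sum {f g : R⟦X⟧} (hg : constantCoeff g = 0) (n : ℕ) :
    coeff n (f.subst g) = ∑ j ∈ range (n + 1), coeff j f * coeff n (g ^ j) := by
  rw [coeff_subst' (HasSubst.of_constantCoeff_zero' hg)]
  refine finsum_eq_sum_of_support_subset _ fun j hj => mem_range.2 ?_
  by_contra hjn
  exact hj (by simp [coeff_pow_eq_zero_of_lt hg (by omega : n < j)])

theorem coeff_PSComp_eq_sum (f g : R⟦X⟧) (n : ℕ) :
    coeff n (PSComp f g) = ∑ j ∈ range (n + 1), coeff j f * coeff n (g ^ j) := by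
  rw [PSComp, coeff_mk, Polynomial.comp,
    Polynomial.eval₂_eq_sum_range' _ (natDegree_trunc_lt f n), Polynomial.finsetSum_coeff]
  refine sum_congr rfl fun j hj => ?_
  rw [Polynomial.coeff_C_mul, coeff_trunc, if_pos (mem_range.1 hj), ← Polynomial.coeff_coe,
    Polynomial.coe_pow, ← coeff_coe_trunc_of_lt (Nat.lt_succ_self n), trunc_trunc_pow,
    coeff_coe_trunc_of_lt (Nat.lt_succ_self n)]

theorem PSComp_eq_subst (f : R⟦X⟧) {g : R⟦X⟧} (hg : constantCoeff g = 0) :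
    PSComp f g = f.subst g := by
  ext n
  rw [coeff_PSComp_eq_sum, coeff_subst_eq_sum hg]

end Composition

section Iterates

variable {R : Type*} [CommRing R] {u : R⟦X⟧}

theorem constantCoeff_PSComp (f g : R⟦X⟧) : constantCoeff (PSComp f g) = constantCoeff f := by
  simpa using coeff_PSComp_eq_sum f g 0

theorem constantCoeff_PSIter (hu0 : constantCoeff u = 0) (k : ℕ) :
    constantCoeff (PSIter u k) = 0 := by
  cases k with
  | zero => exact constantCoeff_X
  | succ k => exact (constantCoeff_PSComp _ _).trans hu0

theorem PSIter_add (hu0 : constantCoeff u = 0) (a b : ℕ) :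
    PSIter u (a + b) = PSComp (PSIter u a) (PSIter u b) := by
  have hb := HasSubst.of_constantCoeff_zero' (constantCoeff_PSIter hu0 b)
  rw [PSComp_eq_subst _ (constantCoeff_PSIter hu0 b)]
  induction a with
  | zero => rw [zero_add, PSIter, subst_X hb]
  | succ a ih =>
    rw [add_right_comm, PSIter, PSIter, PSComp_eq_subst _ (constantCoeff_PSIter hu0 _),
      PSComp_eq_subst _ (constantCoeff_PSIter hu0 _), ih,
      subst_comp_subst_apply (HasSubst.of_constantCoeff_zero' (constantCoeff_PSIter hu0 a)) hb]

theorem coeff_PSComp_eq_mul_add_sum (hu0 : constantCoeff u = 0) {g : R⟦X⟧}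
    (hg : constantCoeff g = 0) (n : ℕ) :
    coeff n (PSComp u g) =
      coeff 1 u * coeff n g + ∑ j ∈ Ico 2 (n + 1), coeff j u * coeff n (g ^ j) := by
  rw [coeff_PSComp_eq_sum]
  cases n with
  | zero => simp [hu0, hg]
  | succ n =>
    rw [range_eq_Ico, sum_eq_sum_Ico_succ_bot (by omega), sum_eq_sum_Ico_succ_bot (by omega),
      coeff_zero_eq_constantCoeff_apply, hu0, zero_mul, zero_add, pow_one]

theorem coeff_one_PSIter (hu0 : constantCoeff u = 0) (k : ℕ) :
    coeff 1 (PSIter u k) = coeff 1 u ^ k := by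
  induction k with
  | zero => simp [PSIter]
  | succ k ih =>
    rw [PSIter, coeff_PSComp_eq_mul_add_sum hu0 (constantCoeff_PSIter hu0 k), ih, pow_succ',
      Ico_self, sum_empty, add_zero]

end Iterates

section Integrality

variable {R : Type*} [NormedCommRing R] [NormOneClass R] [IsUltrametricDist R]

theorem norm_coeff_pow_le_one {g : R⟦X⟧} (hg : ∀ n, ‖coeff n g‖ ≤ 1) (j n : ℕ) :
    ‖coeff n (g ^ j)‖ ≤ 1 := by
  induction j generalizing n with
  | zero => rw [pow_zero, coeff_one]; split_ifs <;> simp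
  | succ j ih =>
    rw [pow_succ, coeff_mul]
    refine IsUltrametricDist.norm_sum_le_of_forall_le_of_nonneg zero_le_one fun x _ => ?_
    exact (norm_mul_le _ _).trans (mul_le_one₀ (ih _) (norm_nonneg _) (hg _))

theorem norm_coeff_PSComp_le_one {f g : R⟦X⟧} (hf : ∀ n, ‖coeff n f‖ ≤ 1)
    (hg : ∀ n, ‖coeff n g‖ ≤ 1) (n : ℕ) : ‖coeff n (PSComp f g)‖ ≤ 1 := by
  rw [coeff_PSComp_eq_sum]
  refine IsUltrametricDist.norm_sum_le_of_forall_le_of_nonneg zero_le_one fun j _ => ?_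
  exact (norm_mul_le _ _).trans
    (mul_le_one₀ (hf j) (norm_nonneg _) (norm_coeff_pow_le_one hg j n))

theorem norm_coeff_PSIter_le_one {u : R⟦X⟧} (hu : ∀ n, ‖coeff n u‖ ≤ 1) (k n : ℕ) :
    ‖coeff n (PSIter u k)‖ ≤ 1 := by
  induction k generalizing n with
  | zero => rw [PSIter, coeff_X]; split_ifs <;> simp
  | succ k ih => exact norm_coeff_PSComp_le_one hu ih n

end Integrality

section ExpPoly

variable {K : Type*} [Field K]

def expPolySubalgebra (μ : K) : Subalgebra K (ℕ → K) :=
  Algebra.adjoin K {(fun k : ℕ => (k : K)), fun k : ℕ => μ ^ k}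

def shiftSub (μ : K) : (ℕ → K) →ₗ[K] (ℕ → K) :=
  LinearMap.funLeft K K Nat.succ - μ • LinearMap.id

theorem shiftSub_apply (μ : K) (c : ℕ → K) (k : ℕ) :
    shiftSub μ c k = c (k + 1) - μ * c k :=
  rfl

theorem natCast_pow_mul_pow_mem_expPolySubalgebra (μ : K) (s j : ℕ) :
    (fun k : ℕ => (k : K) ^ s * (μ ^ j) ^ k) ∈ expPolySubalgebra μ := by
  have hN : (fun k : ℕ => (k : K)) ∈ expPolySubalgebra μ := Algebra.subset_adjoin (by simp)
  have hM : (fun k : ℕ => μ ^ k) ∈ expPolySubalgebra μ := Algebra.subset_adjoin (by simp)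
  convert mul_mem (pow_mem hN s) (pow_mem hM j) using 1
  funext k
  simp [← pow_mul, mul_comm]

theorem shiftSub_natCast_pow_mul_pow (μ ν : K) (s : ℕ) :
    shiftSub μ (fun k : ℕ => (k : K) ^ s * ν ^ k) =
      (ν - μ) • (fun k : ℕ => (k : K) ^ s * ν ^ k) +
        ν • ∑ t ∈ range s, (s.choose t : K) • fun k : ℕ => (k : K) ^ t * ν ^ k := by
  funext k
  have hbinom :
      ((k : K) + 1) ^ s = (∑ t ∈ range s, (k : K) ^ t * s.choose t) + (k : K) ^ s := by
    simp [add_pow, sum_range_succ]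
  simp only [shiftSub_apply, Pi.add_apply, Pi.smul_apply, Finset.sum_apply, smul_eq_mul,
    Nat.cast_succ, hbinom]
  rw [show ∑ t ∈ range s, (s.choose t : K) * ((k : K) ^ t * ν ^ k)
      = (∑ t ∈ range s, (k : K) ^ t * s.choose t) * ν ^ k by
    rw [sum_mul]; exact sum_congr rfl fun _ _ => by ring]
  ring

end ExpPoly

section ExpPolyRecurrence

variable {K : Type*} [Field K] [CharZero K] {μ : K}

theorem natCast_pow_mul_pow_mem_map_shiftSub (hμ : μ ≠ 0) {M : Submodule K (ℕ → K)} {ν : K}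
    (hM : ∀ t, (fun k : ℕ => (k : K) ^ t * ν ^ k) ∈ M) (s : ℕ) :
    (fun k : ℕ => (k : K) ^ s * ν ^ k) ∈ M.map (shiftSub μ) := by
  induction s using Nat.strong_induction_on with
  | _ s ih =>
  have hlow : ∀ r : ℕ, (∑ t ∈ range s, (r.choose t : K) • fun k : ℕ => (k : K) ^ t * ν ^ k)
      ∈ M.map (shiftSub μ) :=
    fun r => Submodule.sum_mem _ fun t ht => Submodule.smul_mem _ _ (ih t (mem_range.1 ht))
  by_cases hν : ν = μ
  -- In the resonant case the leading term cancels, so `s` is reached from degree `s + 1`.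
  · subst hν
    have hs : (ν * (s + 1) : K) ≠ 0 := mul_ne_zero hμ (by exact_mod_cast s.succ_ne_zero)
    refine (Submodule.smul_mem_iff _ hs).1 ?_
    have h := shiftSub_natCast_pow_mul_pow ν ν (s + 1)
    rw [sub_self, zero_smul, zero_add, sum_range_succ, Nat.choose_succ_self_right] at h
    have hcomb : (ν * (s + 1) : K) • (fun k : ℕ => (k : K) ^ s * ν ^ k) =
        shiftSub ν (fun k : ℕ => (k : K) ^ (s + 1) * ν ^ k) -
          ν • ∑ t ∈ range s, ((s + 1).choose t : K) • fun k : ℕ => (k : K) ^ t * ν ^ k := by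
      rw [h]; push_cast; module
    rw [hcomb]
    exact Submodule.sub_mem _ (Submodule.mem_map_of_mem (hM _))
      (Submodule.smul_mem _ _ (hlow _))
  · refine (Submodule.smul_mem_iff _ (sub_ne_zero.2 hν)).1 ?_
    have hcomb : (ν - μ) • (fun k : ℕ => (k : K) ^ s * ν ^ k) =
        shiftSub μ (fun k : ℕ => (k : K) ^ s * ν ^ k) -
          ν • ∑ t ∈ range s, (s.choose t : K) • fun k : ℕ => (k : K) ^ t * ν ^ k := by
      rw [shiftSub_natCast_pow_mul_pow, add_sub_cancel_right]
    rw [hcomb]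
    exact Submodule.sub_mem _ (Submodule.mem_map_of_mem (hM _))
      (Submodule.smul_mem _ _ (hlow _))

theorem exists_shiftSub_eq (hμ : μ ≠ 0) {e : ℕ → K} (he : e ∈ expPolySubalgebra μ) :
    ∃ c ∈ expPolySubalgebra μ, shiftSub μ c = e := by
  suffices hle : Subalgebra.toSubmodule (expPolySubalgebra μ) ≤
      (Subalgebra.toSubmodule (expPolySubalgebra μ)).map (shiftSub μ) from hle he
  conv_lhs => rw [expPolySubalgebra, Algebra.adjoin_eq_span]
  rw [Submodule.span_le]
  rintro _ hx
  obtain ⟨s, j, rfl⟩ := (Submonoid.mem_closure_pair _ _ _).1 hx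
  have hx' : (fun k : ℕ => (k : K)) ^ s * (fun k : ℕ => μ ^ k) ^ j =
      fun k : ℕ => (k : K) ^ s * (μ ^ j) ^ k := by
    funext k
    simp [← pow_mul, mul_comm]
  rw [SetLike.mem_coe, hx']
  exact natCast_pow_mul_pow_mem_map_shiftSub hμ
    (fun t => natCast_pow_mul_pow_mem_expPolySubalgebra μ t j) s

theorem mem_expPolySubalgebra_of_recurrence (hμ : μ ≠ 0) {c e : ℕ → K}
    (he : e ∈ expPolySubalgebra μ) (hc : ∀ k, c (k + 1) = μ * c k + e k) :
    c ∈ expPolySubalgebra μ := by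
  obtain ⟨d, hd, hde⟩ := exists_shiftSub_eq hμ he
  have hgeom : c - d = (c 0 - d 0) • fun k => μ ^ k := by
    funext k
    induction k with
    | zero => simp
    | succ k ih =>
      have hdk : d (k + 1) = μ * d k + e k := by rw [← hde, shiftSub_apply]; ring
      simp only [Pi.sub_apply, Pi.smul_apply, smul_eq_mul] at ih ⊢
      rw [hc, hdk, pow_succ]
      linear_combination μ * ih
  rw [← sub_add_cancel c d, hgeom]
  refine add_mem (Subalgebra.smul_mem _ ?_ _) hd
  simpa using natCast_pow_mul_pow_mem_expPolySubalgebra μ 0 1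

end ExpPolyRecurrence

/-- Since `g` has no constant term, `coeff m (g ^ j)` only involves coefficients of `g` of index
at most `m + 1 - j`. -/
theorem coeff_pow_mem_of_coeff_mem {ι R : Type*} [CommRing R] (S : Subring (ι → R))
    {g : ι → R⟦X⟧} (hg : ∀ i, constantCoeff (g i) = 0) {n : ℕ}
    (hS : ∀ m < n, (fun i => coeff m (g i)) ∈ S) (j m : ℕ) (hm : m + 2 ≤ n + j) :
    (fun i => coeff m (g i ^ j)) ∈ S := by
  induction j generalizing m with
  | zero =>
    simp only [pow_zero, coeff_one]
    split_ifs
    exacts [S.one_mem, S.zero_mem]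
  | succ j ih =>
    have hsum : (fun i => coeff m (g i ^ (j + 1))) =
        ∑ x ∈ antidiagonal m, fun i => coeff x.1 (g i) * coeff x.2 (g i ^ j) := by
      funext i
      simp [pow_succ', coeff_mul]
    rw [hsum]
    refine S.sum_mem fun ⟨a, b⟩ hab => ?_
    simp only [HasAntidiagonal.mem_antidiagonal] at hab
    by_cases ha : a = 0
    · convert S.zero_mem
      simp [ha, hg]
    by_cases hb : b < j
    · convert S.zero_mem with i
      simp [coeff_pow_eq_zero_of_lt (hg i) hb]
    exact S.mul_mem (hS a (by omega)) (ih b (by omega))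

theorem coeff_PSIter_mem_expPolySubalgebra {K : Type*} [Field K] [CharZero K] {u : K⟦X⟧}
    (hu0 : constantCoeff u = 0) (hu1 : coeff 1 u ≠ 0) (n : ℕ) :
    (fun k => coeff n (PSIter u k)) ∈ expPolySubalgebra (coeff 1 u) := by
  induction n using Nat.strong_induction_on with
  | _ n ih =>
  refine mem_expPolySubalgebra_of_recurrence hu1 ?_
    fun k => coeff_PSComp_eq_mul_add_sum hu0 (constantCoeff_PSIter hu0 k) n
  have he : (fun k => ∑ j ∈ Ico 2 (n + 1), coeff j u * coeff n (PSIter u k ^ j)) =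
      ∑ j ∈ Ico 2 (n + 1), coeff j u • fun k => coeff n (PSIter u k ^ j) := by
    funext k
    simp
  rw [he]
  refine sum_mem fun j hj => Subalgebra.smul_mem _ ?_ _
  exact coeff_pow_mem_of_coeff_mem (expPolySubalgebra _).toSubring (constantCoeff_PSIter hu0)
    ih j n (by rw [mem_Ico] at hj; omega)

section Padic

variable {p : ℕ} [Fact p.Prime]

theorem PadicInt.exists_continuousMap_one_add_pow {b : ℤ_[p]} (hb : ‖b‖ < 1) :
    ∃ F : C(ℤ_[p], ℤ_[p]), ∀ k : ℕ, F k = (1 + b) ^ k := by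
  refine ⟨PadicInt.mahlerSeries (b ^ ·), fun k => ?_⟩
  rw [PadicInt.mahlerSeries_apply_nat (tendsto_pow_atTop_nhds_zero_of_norm_lt_one hb) le_rfl,
    add_comm 1 b, add_pow]
  simp [mul_comm]

theorem exists_continuousMap_of_mem_expPolySubalgebra {K : Type*} [NormedField K]
    (φ : ℚ_[p] →+* K) (hφ : Continuous φ) {a : ℚ_[p]} (ha : ‖a - 1‖ < 1) {c : ℕ → K}
    (hc : c ∈ expPolySubalgebra (φ a)) : ∃ F : C(ℤ_[p], K), ∀ k : ℕ, F k = c k := by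
  let restrict : C(ℤ_[p], K) →ₐ[K] (ℕ → K) :=
    AlgHom.pi fun k => ContinuousMap.evalAlgHom K K (k : ℤ_[p])
  suffices expPolySubalgebra (φ a) ≤ restrict.range by
    obtain ⟨F, hF⟩ := this hc
    exact ⟨F, congrFun hF⟩
  have hφZ : Continuous fun m : ℤ_[p] => φ m := hφ.comp continuous_subtype_val
  refine Algebra.adjoin_le (Set.insert_subset_iff.2 ⟨?_, Set.singleton_subset_iff.2 ?_⟩)
  · refine ⟨⟨fun m => φ m, hφZ⟩, funext fun k => ?_⟩
    simp [restrict]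
  · let b : ℤ_[p] := ⟨a - 1, ha.le⟩
    have hb : (b : ℚ_[p]) = a - 1 := rfl
    obtain ⟨F, hF⟩ := PadicInt.exists_continuousMap_one_add_pow (b := b) ha
    have hFa : ∀ k : ℕ, (F k : ℚ_[p]) = a ^ k := fun k => by
      rw [hF, PadicInt.coe_pow, PadicInt.coe_add, PadicInt.coe_one, hb, add_sub_cancel]
    refine ⟨⟨fun m => φ (F m), hφZ.comp F.continuous⟩, funext fun k => ?_⟩
    simp [restrict, hFa]

end Padic

open scoped PowerSeries.WithPiTopology

theorem PowerSeries.WithPiTopology.continuous_iff_continuous_coeff {α R : Type*}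
    [TopologicalSpace α] [TopologicalSpace R] [Semiring R] {f : α → R⟦X⟧} :
    Continuous f ↔ ∀ n, Continuous fun x => coeff n (f x) := by
  refine ⟨fun hf n => (continuous_coeff R n).comp hf, fun h => ?_⟩
  exact continuous_iff_continuousAt.2 fun x =>
    (tendsto_iff_coeff_tendsto _ _ _ _).2 fun n => (h n).continuousAt

open PowerSeries.WithPiTopology

section Extension

variable {p : ℕ} [Fact p.Prime]

theorem exists_continuous_extension_PSIter {K : Type*} [NormedField K] (φ : ℚ_[p] →+* K)
    (hφ : Continuous φ) {u : K⟦X⟧} (hu0 : constantCoeff u = 0) {a : ℚ_[p]} (ha : ‖a - 1‖ < 1)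
    (hau : φ a = coeff 1 u) : ∃ U : ℤ_[p] → K⟦X⟧, Continuous U ∧ ∀ k : ℕ, U k = PSIter u k := by
  have : CharZero K := charZero_of_injective_ringHom φ.injective
  have hcoeff1 : coeff 1 u ≠ 0 := by
    rw [← hau, map_ne_zero]
    rintro rfl
    norm_num at ha
  choose F hF using fun n => exists_continuousMap_of_mem_expPolySubalgebra φ hφ ha
    (hau ▸ coeff_PSIter_mem_expPolySubalgebra hu0 hcoeff1 n)
  refine ⟨fun m => mk fun n => F n m, continuous_iff_continuous_coeff.2 fun n => ?_,
    fun k => ext fun n => ?_⟩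
  · simpa using (F n).continuous
  · simp [hF]

variable {R : Type*} [CommRing R] [TopologicalSpace R] [T2Space R] {u : R⟦X⟧}
  {U : ℤ_[p] → R⟦X⟧}

theorem constantCoeff_extension_PSIter (hU : Continuous U) (hUk : ∀ k : ℕ, U k = PSIter u k)
    (hu0 : constantCoeff u = 0) (m : ℤ_[p]) :
    constantCoeff (U m) = 0 :=
  PadicInt.denseRange_natCast.induction_on m
    (isClosed_eq ((continuous_constantCoeff R).comp hU) continuous_const)
    fun k => by rw [hUk, constantCoeff_PSIter hu0]

theorem extension_PSIter_add [IsTopologicalRing R] (hU : Continuous U)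
    (hUk : ∀ k : ℕ, U k = PSIter u k) (hu0 : constantCoeff u = 0) (m m' : ℤ_[p]) :
    U (m + m') = PSComp (U m) (U m') := by
  ext n
  rw [coeff_PSComp_eq_sum]
  refine PadicInt.denseRange_natCast.induction_on₂
    (p := fun m m' =>
      coeff n (U (m + m')) = ∑ j ∈ range (n + 1), coeff j (U m) * coeff n (U m' ^ j))
    (isClosed_eq ?_ ?_) (fun k k' => ?_) m m'
  · exact (continuous_coeff R n).comp (hU.comp continuous_add)
  · exact continuous_finsetSum _ fun j _ =>
      ((continuous_coeff R j).comp (hU.comp continuous_fst)).mul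
        ((continuous_coeff R n).comp ((hU.comp continuous_snd).pow j))
  · rw [← Nat.cast_add, hUk, hUk, hUk, PSIter_add hu0, coeff_PSComp_eq_sum]

end Extension

theorem norm_coeff_extension_PSIter_le_one {p : ℕ} [Fact p.Prime] {R : Type*}
    [NormedCommRing R] [NormOneClass R] [IsUltrametricDist R] {u : R⟦X⟧} {U : ℤ_[p] → R⟦X⟧}
    (hU : Continuous U) (hUk : ∀ k : ℕ, U k = PSIter u k) (hu : ∀ n, ‖coeff n u‖ ≤ 1)
    (m : ℤ_[p]) (n : ℕ) :
    ‖coeff n (U m)‖ ≤ 1 :=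
  PadicInt.denseRange_natCast.induction_on m
    (isClosed_le (continuous_norm.comp ((continuous_coeff R n).comp hU)) continuous_const)
    fun k => by rw [hUk]; exact norm_coeff_PSIter_le_one hu k n

theorem exists_unique_Zp_iterates_general
    {p : ℕ} [Fact p.Prime] (K : Type*) [NormedField K]
    [Algebra ℚ_[p] K]
    (hiso : ∀ x : ℚ_[p], ‖algebraMap ℚ_[p] K x‖ = ‖x‖)
    (hKna : ∀ x y : K, ‖x + y‖ ≤ max ‖x‖ ‖y‖)
    (u : PowerSeries K)
    (huint : ∀ n : ℕ, ‖PowerSeries.coeff n u‖ ≤ 1)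
    (hu0 : PowerSeries.constantCoeff u = 0)
    -- u'(0) ∈ 1 + pℤ_p
    (hu1 : ∃ a : ℚ_[p], ‖a - 1‖ ≤ (p : ℝ)⁻¹ ∧ algebraMap ℚ_[p] K a = PowerSeries.coeff 1 u) :
    ∃! U : ℤ_[p] → PowerSeries K,
      (∀ (m : ℤ_[p]) (n : ℕ), ‖PowerSeries.coeff n (U m)‖ ≤ 1) ∧
      (∀ m : ℤ_[p], PowerSeries.constantCoeff (U m) = 0) ∧
      (∀ n : ℕ, Continuous fun m : ℤ_[p] => PowerSeries.coeff n (U m)) ∧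
      (∀ k : ℕ, U (k : ℤ_[p]) = PSIter u k) ∧
      (∀ m m' : ℤ_[p], U (m + m') = PSComp (U m) (U m')) ∧
      (∀ (m : ℤ_[p]) (ks : ℕ → ℕ),
        Filter.Tendsto (fun i => ((ks i : ℤ_[p]))) Filter.atTop (nhds m) →
        Filter.Tendsto (fun i => (PowerSeries.coeff 1 u) ^ (ks i)) Filter.atTop
          (nhds (PowerSeries.coeff 1 (U m)))) := by
  have : IsUltrametricDist K := .isUltrametricDist_of_forall_norm_add_le_max_norm hKna
  obtain ⟨a, ha, hau⟩ := hu1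
  have ha1 : ‖a - 1‖ < 1 :=
    ha.trans_lt (inv_lt_one_of_one_lt₀ (by exact_mod_cast (Fact.out : p.Prime).one_lt))
  obtain ⟨U, hU, hUk⟩ := exists_continuous_extension_PSIter (algebraMap ℚ_[p] K)
    (AddMonoidHomClass.isometry_of_norm _ hiso).continuous hu0 ha1 hau
  have hUcoeff := continuous_iff_continuous_coeff.1 hU
  refine ⟨U, ⟨norm_coeff_extension_PSIter_le_one hU hUk huint,
    constantCoeff_extension_PSIter hU hUk hu0, hUcoeff, hUk, extension_PSIter_add hU hUk hu0,
    fun m ks hks => ?_⟩, fun V ⟨_, _, hV, hVk, _⟩ => ?_⟩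
  · simpa [Function.comp_def, hUk, coeff_one_PSIter hu0] using
      ((hUcoeff 1).tendsto m).comp hks
  · refine PadicInt.denseRange_natCast.equalizer (continuous_iff_continuous_coeff.2 hV) hU
      (funext fun k => ?_)
    simp [hVk, hUk]

/-- `ℤ_p`-iterates: if `u ∈ X·O_K[[X]]` is invertible with `u'(0) ∈ 1 + pℤ_p` (and
`u'(0) ≠ 1` for `p` odd, `u'(0) ∈ 1 + 4ℤ_2` for `p = 2`), then `m ↦ u^{∘m}` extends
uniquely from `ℕ` to a continuous map `ℤ_p → X·O_K[[X]]` (coefficientwise `p`-adic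
convergence) satisfying `u^{∘(m+m')} = u^{∘m} ∘ u^{∘m'}` and `(u^{∘m})'(0) = u'(0)^m`
(the latter expressed as the continuous extension of `k ↦ u'(0)^k`). -/
theorem exists_unique_Zp_iterates
    {p : ℕ} [Fact p.Prime] (K : Type*) [NormedField K]
    [Algebra ℚ_[p] K] [FiniteDimensional ℚ_[p] K]
    (hiso : ∀ x : ℚ_[p], ‖algebraMap ℚ_[p] K x‖ = ‖x‖)
    (hKna : ∀ x y : K, ‖x + y‖ ≤ max ‖x‖ ‖y‖)
    (u : PowerSeries K)
    (huint : ∀ n : ℕ, ‖PowerSeries.coeff n u‖ ≤ 1)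
    (hu0 : PowerSeries.constantCoeff u = 0)
    (huunit : ‖PowerSeries.coeff 1 u‖ = 1)
    -- u'(0) ∈ 1 + pℤ_p
    (hu1 : ∃ a : ℚ_[p], ‖a - 1‖ ≤ (p : ℝ)⁻¹ ∧ algebraMap ℚ_[p] K a = PowerSeries.coeff 1 u)
    -- u'(0) ≠ 1 for p odd; u'(0) ∈ 1 + 4ℤ_2 for p = 2
    (hodd : p ≠ 2 → PowerSeries.coeff 1 u ≠ 1)
    (heven : p = 2 → ∃ a : ℚ_[p], ‖a - 1‖ ≤ (4 : ℝ)⁻¹ ∧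
      algebraMap ℚ_[p] K a = PowerSeries.coeff 1 u) :
    ∃! U : ℤ_[p] → PowerSeries K,
      (∀ (m : ℤ_[p]) (n : ℕ), ‖PowerSeries.coeff n (U m)‖ ≤ 1) ∧
      (∀ m : ℤ_[p], PowerSeries.constantCoeff (U m) = 0) ∧
      (∀ n : ℕ, Continuous fun m : ℤ_[p] => PowerSeries.coeff n (U m)) ∧
      (∀ k : ℕ, U (k : ℤ_[p]) = PSIter u k) ∧
      (∀ m m' : ℤ_[p], U (m + m') = PSComp (U m) (U m')) ∧
      (∀ (m : ℤ_[p]) (ks : ℕ → ℕ),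
        Filter.Tendsto (fun i => ((ks i : ℤ_[p]))) Filter.atTop (nhds m) →
        Filter.Tendsto (fun i => (PowerSeries.coeff 1 u) ^ (ks i)) Filter.atTop
          (nhds (PowerSeries.coeff 1 (U m)))) :=
  exists_unique_Zp_iterates_general K hiso hKna u huint hu0 hu1
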